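/- arXiv:2103.03110 — 6 statements merged into one kernel-verified Lean document; each statement's English description precedes it below -/
import Mathlib

section
/- For every complex number k with Re(k) > -1, the integral over x from 0 to 1 of artanh(x) * (-log x)^k / x (where (-log x)^k is the principal-branch complex power of the positive real -log x) equals (1 - 2^(-(k+2))) * ζ(k+2) * Γ(k+1). -/
/-!
Substituting `x = e^{-t}` turns the integral into the Mellin transform at `k + 1` of
`t ↦ artanh (e^{-t}) = ∑ₙ e^{-(2n+1)t} / (2n+1)`. Integrating termwise, each exponential
contributes `Γ(k+1) (2n+1)^{-(k+1)}`, and the remaining odd Dirichlet series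
`∑ₙ (2n+1)^{-(k+2)}` is `ζ(k+2)` minus its even part `2^{-(k+2)} ζ(k+2)`.
-/

/-- The real inverse hyperbolic tangent, `artanh x = (1/2)(log(1+x) - log(1-x))`. -/
noncomputable def artanh (x : ℝ) : ℝ := (Real.log (1 + x) - Real.log (1 - x)) / 2

open MeasureTheory Set

theorem hasSum_artanh {x : ℝ} (hx : |x| < 1) :
    HasSum (fun n : ℕ => x ^ (2 * n + 1) / (2 * n + 1)) (artanh x) := by
  refine ((Real.hasSum_log_sub_log_of_abs_lt_one hx).div_const 2).congr_fun fun n => ?_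
  field_simp

theorem hasSum_one_div_odd_nat_cpow {s : ℂ} (hs : 1 < s.re) :
    HasSum (fun n : ℕ => 1 / ((2 * n + 1 : ℕ) : ℂ) ^ s) ((1 - 2 ^ (-s)) * riemannZeta s) := by
  set f : ℕ → ℂ := fun n => 1 / (n : ℂ) ^ s
  have hf : HasSum f (riemannZeta s) := by
    rw [zeta_eq_tsum_one_div_nat_cpow hs]
    exact (Complex.summable_one_div_nat_cpow.mpr hs).hasSum
  have h_even : HasSum (fun n => f (2 * n)) (2 ^ (-s) * riemannZeta s) := by
    refine (hf.mul_left _).congr_fun fun n => ?_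
    simp only [f, Nat.cast_mul, Nat.cast_ofNat]
    rw [← Nat.cast_ofNat (R := ℂ), Complex.natCast_mul_natCast_cpow, Complex.cpow_neg]
    field_simp
  obtain ⟨b, h_odd⟩ := hf.summable.comp_injective (i := fun n => 2 * n + 1)
    fun a b h => by simp only at h; omega
  have hb : b = (1 - 2 ^ (-s)) * riemannZeta s := by
    linear_combination -hf.unique (h_even.even_add_odd h_odd)
  exact hb ▸ h_odd

theorem integral_Ioo_zero_one_inv_smul_comp_neg_log {E : Type*} [NormedAddCommGroup E]
    [NormedSpace ℝ E] (g : ℝ → E) :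
    ∫ x in Ioo 0 1, x⁻¹ • g (-Real.log x) = ∫ t in Ioi 0, g t := by
  have h_image : (fun t => Real.exp (-t)) '' Ioi 0 = Ioo 0 1 := by
    rw [← image_image Real.exp Neg.neg, image_neg_Ioi, neg_zero, Real.image_exp_Iio,
      Real.exp_zero]
  have h_deriv (t : ℝ) : HasDerivAt (fun t => Real.exp (-t)) (-Real.exp (-t)) t := by
    simpa using (hasDerivAt_neg t).exp
  rw [← h_image, integral_image_eq_integral_abs_deriv_smul measurableSet_Ioi
    (fun t _ => (h_deriv t).hasDerivWithinAt) (Real.exp_injective.comp neg_injective).injOn]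
  refine setIntegral_congr_fun measurableSet_Ioi fun t _ => ?_
  simp [smul_smul, Real.exp_ne_zero]

theorem integral_mul_neg_log_cpow_div_eq_mellin (f : ℝ → ℂ) (k : ℂ) :
    ∫ x in (0:ℝ)..1, f x * ((-Real.log x : ℝ) : ℂ) ^ k / (x : ℂ)
      = mellin (fun t => f (Real.exp (-t))) (k + 1) := by
  rw [intervalIntegral.integral_of_le zero_le_one, integral_Ioc_eq_integral_Ioo, mellin,
    ← integral_Ioo_zero_one_inv_smul_comp_neg_log]
  refine setIntegral_congr_fun measurableSet_Ioo fun x hx => ?_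
  simp [Real.exp_log hx.1, div_eq_inv_mul, mul_comm]

theorem mellin_artanh_comp_exp_neg {s : ℂ} (hs : 0 < s.re) :
    mellin (fun t => (artanh (Real.exp (-t)) : ℂ)) s
      = Complex.Gamma s * ((1 - 2 ^ (-(s + 1))) * riemannZeta (s + 1)) := by
  set p : ℕ → ℝ := fun n => ((2 * n + 1 : ℕ) : ℝ)
  have hp (n : ℕ) : 0 < p n := by positivity
  have h_series (t : ℝ) (ht : t ∈ Ioi 0) :
      HasSum (fun n => 1 / (p n : ℂ) * Real.exp (-p n * t)) (artanh (Real.exp (-t)) : ℂ) := by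
    have hx : |Real.exp (-t)| < 1 := by
      rwa [abs_of_pos (Real.exp_pos _), Real.exp_lt_one_iff, neg_lt_zero]
    refine (Complex.hasSum_ofReal.mpr (hasSum_artanh hx)).congr_fun fun n => ?_
    rw [← Real.exp_nat_mul]
    simp only [p]
    push_cast
    ring_nf
  have h_summable : Summable fun n => ‖1 / (p n : ℂ)‖ / p n ^ s.re := by
    have := (Real.summable_one_div_nat_rpow.mpr (by linarith : 1 < s.re + 1)).comp_injective
      (i := fun n => 2 * n + 1) fun a b h => by simp only at h; omega
    refine this.congr fun n => ?_
    simp only [Function.comp_apply, norm_div, norm_one, Complex.norm_real, Real.norm_eq_abs,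
      abs_of_pos (hp n), Real.rpow_add (hp n), Real.rpow_one, p]
    ring
  refine (hasSum_mellin (fun n => Or.inr (hp n)) hs h_series h_summable).unique
    (((hasSum_one_div_odd_nat_cpow (s := s + 1) (by simp; linarith)).mul_left _).congr_fun
      fun n => ?_)
  have hn : ((2 * n + 1 : ℕ) : ℂ) ≠ 0 := Nat.cast_ne_zero.mpr (2 * n).succ_ne_zero
  simp only [p, Complex.ofReal_natCast, Complex.cpow_add _ _ hn, Complex.cpow_one]
  field_simp

theorem integral_artanh_mul_neg_log_cpow (k : ℂ) (hk : -1 < k.re) :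
    ∫ x in (0:ℝ)..1, (artanh x : ℂ) * ((-Real.log x : ℝ) : ℂ) ^ k / (x : ℂ) =
      (1 - (2:ℂ) ^ (-(k + 2))) * riemannZeta (k + 2) * Complex.Gamma (k + 1) := by
  rw [integral_mul_neg_log_cpow_div_eq_mellin, mellin_artanh_comp_exp_neg (by simp; linarith),
    show k + 1 + 1 = k + 2 by ring]
  ring
end

section
/- For all real numbers m > 0 and n > 0 and every complex number k with Re(k) > -1, the integral over x from 0 to 1 of (-log x)^k * log((x^m + 1)(1 - x^n)) / x (where (-log x)^k is the principal-branch complex power of the positive real -log x) equals (1/2) * ζ(k+2) * Γ(k+1) * ((2 - 2^(-k)) * m^(-k-1) - 2 * n^(-k-1)). -/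
/-!
Substituting `x = e^{-t}` turns the integral into the Mellin transform at `s = k + 1` of
`log (1 + e^{-mt}) + log (1 - e^{-nt})`. Expanding both logarithms as Dirichlet-type series
`∑ a_j e^{-p_j t}` and integrating termwise (`hasSum_mellin`) gives
`Γ(s) ∑ a_j / p_j^s`, which is `Γ(s) m^{-s} η(s + 1) - Γ(s) n^{-s} ζ(s + 1)` with
`η(s) = (1 - 2^{1-s}) ζ(s)` the alternating zeta function.
-/

open MeasureTheory Set

theorem intervalIntegral_neg_log_cpow_mul_div_eq_mellin (g : ℝ → ℂ) (s : ℂ) :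
    ∫ x in (0:ℝ)..1, ((-Real.log x : ℝ) : ℂ) ^ (s - 1) * g x / x =
      mellin (fun t ↦ g (Real.exp (-t))) s := by
  have hImage : (fun t ↦ Real.exp (-t)) '' Ioi 0 = Ioo 0 1 := by
    ext x
    constructor
    · rintro ⟨t, ht, rfl⟩
      exact ⟨Real.exp_pos _, Real.exp_lt_one_iff.mpr (neg_lt_zero.mpr ht)⟩
    · rintro ⟨hx0, hx1⟩
      exact ⟨-Real.log x, neg_pos.mpr (Real.log_neg hx0 hx1), by simp [Real.exp_log hx0]⟩
  have hDeriv : ∀ t ∈ Ioi (0:ℝ),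
      HasDerivWithinAt (fun t ↦ Real.exp (-t)) (-Real.exp (-t)) (Ioi 0) t := fun t _ ↦ by
    simpa using (hasDerivAt_neg t).exp.hasDerivWithinAt
  have hInj : InjOn (fun t ↦ Real.exp (-t)) (Ioi 0) :=
    fun a _ b _ h ↦ neg_injective (Real.exp_injective h)
  rw [intervalIntegral.integral_of_le zero_le_one, integral_Ioc_eq_integral_Ioo, ← hImage,
    integral_image_eq_integral_abs_deriv_smul measurableSet_Ioi hDeriv hInj, mellin]
  refine setIntegral_congr_fun measurableSet_Ioi fun t _ ↦ ?_
  have hexp : (Real.exp (-t) : ℂ) ≠ 0 := Complex.ofReal_ne_zero.mpr (Real.exp_pos _).ne'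
  simp only [abs_neg, Real.abs_exp, Real.log_exp, neg_neg, Complex.real_smul, smul_eq_mul]
  field_simp

theorem hasSum_log_one_sub_mul_rpow_exp_neg {ε c t : ℝ} (hε : |ε| ≤ 1) (hc : 0 < c)
    (ht : 0 < t) :
    HasSum (fun j : ℕ ↦ (-(ε ^ (j + 1) / (j + 1)) : ℂ) * Real.exp (-(c * (j + 1)) * t))
      (Real.log (1 - ε * Real.exp (-t) ^ c)) := by
  have hlt : |ε * Real.exp (-t) ^ c| < 1 := by
    rw [abs_mul, ← Real.exp_mul, Real.abs_exp]
    exact mul_lt_one_of_nonneg_of_lt_one_right hε (Real.exp_pos _).le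
      (Real.exp_lt_one_iff.mpr (by nlinarith))
  have hlog := (Real.hasSum_pow_div_log_of_abs_lt_one hlt).neg
  rw [neg_neg] at hlog
  refine (Complex.hasSum_ofReal.mpr hlog).congr_fun fun j ↦ ?_
  rw [mul_pow, ← Real.exp_mul, ← Real.exp_nat_mul]
  push_cast
  ring_nf

theorem hasSum_one_div_nat_add_one_cpow {s : ℂ} (hs : 1 < s.re) :
    HasSum (fun j : ℕ ↦ 1 / ((j : ℂ) + 1) ^ s) (riemannZeta s) := by
  rw [zeta_eq_tsum_one_div_nat_add_one_cpow hs]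
  exact_mod_cast ((summable_nat_add_iff 1).mpr (Complex.summable_one_div_nat_cpow.mpr hs)).hasSum

theorem hasSum_neg_one_pow_div_nat_add_one_cpow {s : ℂ} (hs : 1 < s.re) :
    HasSum (fun j : ℕ ↦ (-1) ^ j / ((j : ℂ) + 1) ^ s)
      ((1 - 2 ^ (1 - s)) * riemannZeta s) := by
  set z : ℕ → ℂ := fun j ↦ 1 / ((j : ℂ) + 1) ^ s
  have hz : HasSum z (riemannZeta s) := hasSum_one_div_nat_add_one_cpow hs
  have hOdd : HasSum (fun i ↦ z (2 * i + 1)) (2 ^ (-s) * riemannZeta s) := by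
    refine (hz.mul_left _).congr_fun fun i ↦ ?_
    have h2i : (((2 * i + 1 : ℕ) : ℂ) + 1) = ((2 : ℕ) : ℂ) * ((i + 1 : ℕ) : ℂ) := by
      push_cast; ring
    simp only [z, h2i, Complex.natCast_mul_natCast_cpow, Complex.cpow_neg]
    push_cast
    field_simp
  obtain ⟨E, hEven⟩ : Summable fun i ↦ z (2 * i) :=
    hz.summable.comp_injective (mul_right_injective₀ two_ne_zero)
  have hE : E + 2 ^ (-s) * riemannZeta s = riemannZeta s := (hEven.even_add_odd hOdd).unique hz
  have hval : E + -(2 ^ (-s) * riemannZeta s) = (1 - 2 ^ (1 - s)) * riemannZeta s := by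
    have h2 : (2 : ℂ) ^ (1 - s) = 2 * 2 ^ (-s) := by
      rw [sub_eq_add_neg, Complex.cpow_add _ _ two_ne_zero, Complex.cpow_one]
    rw [h2]
    linear_combination hE
  refine hval ▸ (hEven.congr_fun fun i ↦ ?_).even_add_odd (hOdd.neg.congr_fun fun i ↦ ?_)
  · simp [z, pow_mul]
  · simp [z, pow_succ, pow_mul, neg_div]

theorem summable_norm_div_mul_nat_add_one_rpow {ε c σ : ℝ} (hε : |ε| ≤ 1) (hc : 0 < c)
    (hσ : 0 < σ) :
    Summable fun j : ℕ ↦ ‖(-(ε ^ (j + 1) / (j + 1)) : ℂ)‖ / (c * (j + 1)) ^ σ := by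
  have hp : Summable fun j : ℕ ↦ 1 / |(j : ℝ) + 1| ^ (1 + σ) :=
    (Real.summable_one_div_nat_add_rpow 1 _).mpr (by linarith)
  refine .of_nonneg_of_le (fun j ↦ by positivity) (fun j ↦ ?_) (hp.mul_left (c ^ σ)⁻¹)
  have hj : (0 : ℝ) < j + 1 := by positivity
  calc ‖(-(ε ^ (j + 1) / (j + 1)) : ℂ)‖ / (c * (j + 1)) ^ σ
      = |ε| ^ (j + 1) * ((c ^ σ)⁻¹ * (1 / |(j : ℝ) + 1| ^ (1 + σ))) := by
        rw [norm_neg, norm_div, norm_pow, Complex.norm_real, Real.norm_eq_abs,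
          ← Nat.cast_add_one, Complex.norm_natCast, Nat.cast_add_one, abs_of_pos hj,
          Real.mul_rpow hc.le hj.le, Real.rpow_add hj, Real.rpow_one]
        field_simp
    _ ≤ 1 * ((c ^ σ)⁻¹ * (1 / |(j : ℝ) + 1| ^ (1 + σ))) := by
        gcongr
        exact pow_le_one₀ (abs_nonneg ε) hε
    _ = _ := one_mul _

theorem hasSum_gamma_mul_div_mul_nat_add_one_cpow {ε c : ℝ} (hc : 0 < c) {s L : ℂ}
    (hL : HasSum (fun j : ℕ ↦ (ε : ℂ) ^ j / ((j : ℂ) + 1) ^ (s + 1)) L) :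
    HasSum (fun j : ℕ ↦
        Complex.Gamma s * (-(ε ^ (j + 1) / (j + 1)) : ℂ) / ((c * (j + 1) : ℝ) : ℂ) ^ s)
      (-(Complex.Gamma s * (c : ℂ) ^ (-s) * ε * L)) := by
  refine (hL.mul_left (Complex.Gamma s * (c : ℂ) ^ (-s) * ε)).neg.congr_fun fun j ↦ ?_
  have hj : ((j : ℂ) + 1) ≠ 0 := Nat.cast_add_one_ne_zero j
  rw [Complex.ofReal_mul, Complex.mul_cpow_ofReal_nonneg hc.le (by positivity),
    Complex.cpow_add _ _ hj, Complex.cpow_one, Complex.cpow_neg]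
  push_cast
  have hcs : (c : ℂ) ^ s ≠ 0 := by simp [Complex.cpow_eq_zero_iff, hc.ne']
  have hjs : ((j : ℂ) + 1) ^ s ≠ 0 := by simp [Complex.cpow_eq_zero_iff, hj]
  field_simp
  ring

theorem mellin_eq_add_of_hasSum {ι κ : Type*} [Countable ι] [Countable κ] {a : ι → ℂ}
    {b : κ → ℂ} {p : ι → ℝ} {q : κ → ℝ} {F G H : ℝ → ℂ} {s A B : ℂ}
    (hp : ∀ i, a i = 0 ∨ 0 < p i) (hq : ∀ i, b i = 0 ∨ 0 < q i) (hs : 0 < s.re)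
    (hF : ∀ t ∈ Ioi 0, HasSum (fun i ↦ a i * Real.exp (-p i * t)) (F t))
    (hG : ∀ t ∈ Ioi 0, HasSum (fun i ↦ b i * Real.exp (-q i * t)) (G t))
    (hH : ∀ t ∈ Ioi 0, H t = F t + G t)
    (hF_sum : Summable fun i ↦ ‖a i‖ / p i ^ s.re)
    (hG_sum : Summable fun i ↦ ‖b i‖ / q i ^ s.re)
    (hA : HasSum (fun i ↦ Complex.Gamma s * a i / p i ^ s) A)
    (hB : HasSum (fun i ↦ Complex.Gamma s * b i / q i ^ s) B) :
    mellin H s = A + B := by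
  -- `mellin` is additive only for convergent integrands, so the two expansions are merged into
  -- one series indexed by `ι ⊕ κ` and fed to `hasSum_mellin` at once.
  have hpq : ∀ i, Sum.elim a b i = 0 ∨ 0 < Sum.elim p q i := by
    rintro (i | i)
    exacts [hp i, hq i]
  have hFG : ∀ t ∈ Ioi 0,
      HasSum (fun i ↦ Sum.elim a b i * Real.exp (-Sum.elim p q i * t)) (H t) := fun t ht ↦ by
    rw [hH t ht]
    exact (hF t ht).sum (hG t ht)
  have hsum : Summable fun i ↦ ‖Sum.elim a b i‖ / Sum.elim p q i ^ s.re :=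
    Summable.sum _ hF_sum hG_sum
  have hAB := HasSum.sum (f := fun i ↦ Complex.Gamma s * Sum.elim a b i / Sum.elim p q i ^ s)
    hA hB
  exact (hasSum_mellin hpq hs hFG hsum).unique hAB

theorem integral_neg_log_cpow_mul_log_prod (m n : ℝ) (hm : 0 < m) (hn : 0 < n)
    (k : ℂ) (hk : -1 < k.re) :
    ∫ x in (0:ℝ)..1,
        ((-Real.log x : ℝ) : ℂ) ^ k * (Real.log ((x ^ m + 1) * (1 - x ^ n)) : ℂ) / (x : ℂ) =
      (1 / 2) * riemannZeta (k + 2) * Complex.Gamma (k + 1) *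
        ((2 - (2:ℂ) ^ (-k)) * (m : ℂ) ^ (-k - 1) - 2 * (n : ℂ) ^ (-k - 1)) := by
  have hs : 0 < (k + 1).re := by simp only [Complex.add_re, Complex.one_re]; linarith
  have hζ : 1 < (k + 1 + 1).re := by simp only [Complex.add_re, Complex.one_re]; linarith
  have hsplit : ∀ t ∈ Ioi (0:ℝ),
      (Real.log ((Real.exp (-t) ^ m + 1) * (1 - Real.exp (-t) ^ n)) : ℂ) =
        Real.log (1 - (-1) * Real.exp (-t) ^ m) + Real.log (1 - 1 * Real.exp (-t) ^ n) :=
    fun t ht ↦ by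
      have hlt : Real.exp (-t) ^ n < 1 := Real.rpow_lt_one (Real.exp_pos _).le
        (Real.exp_lt_one_iff.mpr (neg_neg_of_pos ht)) hn
      rw [Real.log_mul (by positivity) (by linarith)]
      push_cast
      ring_nf
  have hmellin := mellin_eq_add_of_hasSum (fun _ ↦ Or.inr (by positivity))
    (fun _ ↦ Or.inr (by positivity)) hs
    (fun t ht ↦ hasSum_log_one_sub_mul_rpow_exp_neg (by norm_num) hm ht)
    (fun t ht ↦ hasSum_log_one_sub_mul_rpow_exp_neg (by norm_num) hn ht) hsplit
    (summable_norm_div_mul_nat_add_one_rpow (by norm_num) hm hs)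
    (summable_norm_div_mul_nat_add_one_rpow (by norm_num) hn hs)
    (hasSum_gamma_mul_div_mul_nat_add_one_cpow hm (ε := -1) (by
      simpa only [Complex.ofReal_neg, Complex.ofReal_one] using
        hasSum_neg_one_pow_div_nat_add_one_cpow hζ))
    (hasSum_gamma_mul_div_mul_nat_add_one_cpow hn (ε := 1) (by
      simpa only [Complex.ofReal_one, one_pow] using hasSum_one_div_nat_add_one_cpow hζ))
  have hsub := intervalIntegral_neg_log_cpow_mul_div_eq_mellin
    (fun x ↦ (Real.log ((x ^ m + 1) * (1 - x ^ n)) : ℂ)) (k + 1)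
  rw [add_sub_cancel_right] at hsub
  rw [hsub, hmellin, show k + 1 + 1 = k + 2 by ring, show (1 : ℂ) - (k + 2) = -k - 1 by ring,
    show -(k + 1) = -k - 1 by ring, Complex.cpow_sub _ _ two_ne_zero, Complex.cpow_one]
  push_cast
  ring
end

section
/- For all real numbers n > -1 and p > -1 and every complex number k with Re(k) > -1, the integral over x from 0 to 1 of (-log x)^(k+1) * (x^n - x^p) / ((x^(n+1) - 1)(x^(p+1) - 1)) dx (where (-log x)^(k+1) is the principal-branch complex power of the positive real -log x) equals ζ(k+2) * Γ(k+2) * ((n+1)^(-k-2) - (p+1)^(-k-2)). -/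
/-!
Substituting `x = e^{-t}` turns the integral into the Mellin transform at `s = k + 2` of
`1 / (e^{(n+1)t} - 1) - 1 / (e^{(p+1)t} - 1)`. Expanding `1 / (e^t - 1) = ∑_{m ≥ 1} e^{-mt}` and
integrating termwise gives `∫₀^∞ t^{s-1} / (e^t - 1) dt = Γ(s) ζ(s)`, and rescaling `t ↦ a t`
contributes the factor `a^{-s}`.
-/

open MeasureTheory Set Complex Real

lemma hasSum_exp_neg_nat_add_one_mul {t : ℝ} (ht : 0 < t) :
    HasSum (fun m : ℕ => rexp (-(m + 1) * t)) (rexp t - 1)⁻¹ := by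
  have hgeom := (hasSum_geometric_of_lt_one (Real.exp_pos _).le
    (Real.exp_lt_one_iff.mpr (neg_lt_zero.mpr ht))).mul_left (rexp (-t))
  have hsum : rexp (-t) * (1 - rexp (-t))⁻¹ = (rexp t - 1)⁻¹ := by
    have : rexp t - 1 ≠ 0 := (sub_pos.mpr (Real.one_lt_exp_iff.mpr ht)).ne'
    rw [Real.exp_neg]
    field_simp
  rw [hsum] at hgeom
  refine hgeom.congr_fun fun m => ?_
  rw [← Real.exp_nat_mul, ← Real.exp_add]
  ring_nf

lemma mellin_inv_exp_sub_one {s : ℂ} (hs : 1 < s.re) :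
    mellin (fun t : ℝ => (((rexp t - 1)⁻¹ : ℝ) : ℂ)) s = Gamma s * riemannZeta s := by
  have hmellin := hasSum_mellin (a := fun _ : ℕ => 1) (p := fun m => m + 1)
    (F := fun t : ℝ => (((rexp t - 1)⁻¹ : ℝ) : ℂ))
    (fun m => Or.inr (by positivity)) (by linarith)
    (fun t ht => by simpa using (hasSum_ofReal.mpr (hasSum_exp_neg_nat_add_one_mul ht)))
    (by simpa using (summable_nat_add_iff 1).mpr (Real.summable_nat_rpow_inv.mpr hs))
  rw [← hmellin.tsum_eq, zeta_eq_tsum_one_div_nat_add_one_cpow hs, ← tsum_mul_left]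
  simp [div_eq_mul_inv]

lemma mellinConvergent_inv_exp_sub_one {s : ℂ} (hs : 1 < s.re) :
    MellinConvergent (fun t : ℝ => (((rexp t - 1)⁻¹ : ℝ) : ℂ)) s := by
  -- otherwise the Mellin integral would be the junk value `0`, but `Γ(s) ζ(s) ≠ 0`
  by_contra h
  have hne : Gamma s * riemannZeta s ≠ 0 :=
    mul_ne_zero (Gamma_ne_zero_of_re_pos (by linarith)) (riemannZeta_ne_zero_of_one_lt_re hs)
  exact hne (by rw [← mellin_inv_exp_sub_one hs, mellin, integral_undef h])

lemma hasMellin_inv_exp_mul_sub_one {a : ℝ} (ha : 0 < a) {s : ℂ} (hs : 1 < s.re) :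
    HasMellin (fun t : ℝ => (((rexp (a * t) - 1)⁻¹ : ℝ) : ℂ)) s
      ((a : ℂ) ^ (-s) * (Gamma s * riemannZeta s)) :=
  ⟨(MellinConvergent.comp_mul_left ha).mpr (mellinConvergent_inv_exp_sub_one hs), by
    rw [mellin_comp_mul_left (fun t : ℝ => (((rexp t - 1)⁻¹ : ℝ) : ℂ)) s ha,
      mellin_inv_exp_sub_one hs, smul_eq_mul]⟩

lemma image_exp_neg_Ioi_zero : (fun t => rexp (-t)) '' Ioi 0 = Ioo 0 1 := by
  rw [show (fun t => rexp (-t)) = rexp ∘ Neg.neg from rfl, image_comp, image_neg_Ioi, neg_zero,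
    Real.image_exp_Iio, Real.exp_zero]

lemma intervalIntegral_zero_one_eq_integral_Ioi_exp_neg {E : Type*} [NormedAddCommGroup E]
    [NormedSpace ℝ E] (g : ℝ → E) :
    ∫ x in (0:ℝ)..1, g x = ∫ t in Ioi 0, rexp (-t) • g (rexp (-t)) := by
  rw [intervalIntegral.integral_of_le zero_le_one, integral_Ioc_eq_integral_Ioo,
    ← image_exp_neg_Ioi_zero, integral_image_eq_integral_abs_deriv_smul measurableSet_Ioi
      (fun t _ => ((hasDerivAt_neg t).exp.hasDerivWithinAt))
      (fun x _ y _ h => neg_injective (Real.exp_injective h))]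
  refine setIntegral_congr_fun measurableSet_Ioi fun t _ => ?_
  simp

lemma exp_neg_mul_rpow_sub_rpow_div {n p t : ℝ} (hn : n + 1 ≠ 0) (hp : p + 1 ≠ 0) (ht : t ≠ 0) :
    rexp (-t) * (rexp (-t) ^ n - rexp (-t) ^ p) /
        ((rexp (-t) ^ (n + 1) - 1) * (rexp (-t) ^ (p + 1) - 1)) =
      (rexp ((n + 1) * t) - 1)⁻¹ - (rexp ((p + 1) * t) - 1)⁻¹ := by
  have hpow (a : ℝ) : rexp (-t) ^ a = (rexp (a * t))⁻¹ := by
    rw [← Real.exp_mul, ← Real.exp_neg, neg_mul, mul_comm]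
  have hne (a : ℝ) (ha : a ≠ 0) : rexp (a * t) ≠ 1 :=
    (Real.exp_eq_one_iff _).not.mpr (mul_ne_zero ha ht)
  rw [mul_sub, ← Real.rpow_one_add' (Real.exp_pos _).le (by rwa [add_comm]),
    ← Real.rpow_one_add' (Real.exp_pos _).le (by rwa [add_comm]), add_comm 1, add_comm 1,
    hpow, hpow]
  have hA := hne _ hn
  have hB := hne _ hp
  have hA0 := (Real.exp_pos ((n + 1) * t)).ne'
  have hB0 := (Real.exp_pos ((p + 1) * t)).ne'
  generalize rexp ((n + 1) * t) = A at *
  generalize rexp ((p + 1) * t) = B at *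
  have := sub_ne_zero.mpr hA
  have := sub_ne_zero.mpr hA.symm
  have := sub_ne_zero.mpr hB
  have := sub_ne_zero.mpr hB.symm
  field_simp
  ring

theorem integral_neg_log_cpow_mul_rpow_sub_div_sub_one (n p : ℝ)
    (hn : -1 < n) (hp : -1 < p) (k : ℂ) (hk : -1 < k.re) :
    ∫ x in (0:ℝ)..1,
        ((-Real.log x : ℝ) : ℂ) ^ (k + 1) * ((x ^ n : ℝ) - (x ^ p : ℝ) : ℂ) /
          ((((x ^ (n + 1) : ℝ) : ℂ) - 1) * (((x ^ (p + 1) : ℝ) : ℂ) - 1)) =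
      riemannZeta (k + 2) * Complex.Gamma (k + 2) *
        (((n + 1 : ℝ) : ℂ) ^ (-k - 2) - ((p + 1 : ℝ) : ℂ) ^ (-k - 2)) := by
  have ha : 0 < n + 1 := by linarith
  have hb : 0 < p + 1 := by linarith
  have hs : 1 < (k + 2).re := by rw [add_re, re_ofNat]; linarith
  obtain ⟨hconv_a, hmellin_a⟩ := hasMellin_inv_exp_mul_sub_one ha hs
  obtain ⟨hconv_b, hmellin_b⟩ := hasMellin_inv_exp_mul_sub_one hb hs
  calc _ = mellin (fun t : ℝ => (((rexp ((n + 1) * t) - 1)⁻¹ : ℝ) : ℂ) -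
        (((rexp ((p + 1) * t) - 1)⁻¹ : ℝ) : ℂ)) (k + 2) := by
        rw [intervalIntegral_zero_one_eq_integral_Ioi_exp_neg]
        refine setIntegral_congr_fun measurableSet_Ioi fun t (ht : 0 < t) => ?_
        dsimp only
        rw [Real.log_exp, neg_neg, real_smul, smul_eq_mul, show k + 2 - 1 = k + 1 by ring,
          ← ofReal_sub ((rexp ((n + 1) * t) - 1)⁻¹),
          ← exp_neg_mul_rpow_sub_rpow_div ha.ne' hb.ne' ht.ne']
        push_cast
        ring
    _ = _ := by
      rw [(hasMellin_sub hconv_a hconv_b).2, hmellin_a, hmellin_b,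
        show -k - 2 = -(k + 2) by ring]
      ring
end

section
/- For all real numbers m > -1 and p > -1, the integral over x from 0 to 1 of (x^m - x^p) / ((x^(m+1) + 1)(x^(p+1) + 1) * log x) dx equals (1/2) * log((m+1)/(p+1)). -/
/-!
Both sides are the integral of the positive kernel `x ^ s / (x ^ (s + 1) + 1) ^ 2` over
`(0, 1] × [p, m]`, taken in the two possible orders. In `s` the kernel has the antiderivative
`-(x ^ (s + 1) + 1)⁻¹ / (x * log x)`, which produces the integrand; in `x` it has the
antiderivative `-(x ^ (s + 1) + 1)⁻¹ / (s + 1)`, which produces `1 / (2 * (s + 1))`, and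
integrating this over `[p, m]` gives `log ((m + 1) / (p + 1)) / 2`.
-/

open MeasureTheory Set intervalIntegral

theorem integral_const_rpow_div_const_rpow_add_one_sq {x : ℝ} (hx₀ : 0 < x) (hx₁ : x ≠ 1)
    (p m : ℝ) :
    ∫ s in p..m, x ^ s / (x ^ (s + 1) + 1) ^ 2 =
      (x ^ m - x ^ p) / ((x ^ (m + 1) + 1) * (x ^ (p + 1) + 1) * Real.log x) := by
  have hlog : Real.log x ≠ 0 := Real.log_ne_zero_of_pos_of_ne_one hx₀ hx₁
  have hpos : ∀ s : ℝ, 0 < x ^ (s + 1) + 1 := fun s => by positivity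
  have hderiv : ∀ s ∈ uIcc p m,
      HasDerivAt (fun s : ℝ => -(x ^ (s + 1) + 1)⁻¹ / (x * Real.log x))
        (x ^ s / (x ^ (s + 1) + 1) ^ 2) s := by
    intro s _
    have h := ((Real.hasStrictDerivAt_const_rpow hx₀ (s + 1)).hasDerivAt.comp_add_const s 1
      |>.add_const 1).inv (hpos s).ne'
    refine (h.neg.div_const _).congr_deriv ?_
    rw [Real.rpow_add_one hx₀.ne']
    field_simp
  have hint : IntervalIntegrable (fun s : ℝ => x ^ s / (x ^ (s + 1) + 1) ^ 2) volume p m := by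
    refine Continuous.intervalIntegrable ?_ p m
    exact Continuous.div (by fun_prop (disch := exact hx₀.ne'))
      (by fun_prop (disch := exact hx₀.ne')) fun s => (pow_pos (hpos s) 2).ne'
  rw [integral_eq_sub_of_hasDerivAt hderiv hint]
  field_simp [(hpos m).ne', (hpos p).ne']
  rw [Real.rpow_add_one hx₀.ne', Real.rpow_add_one hx₀.ne']
  ring

theorem integral_rpow_div_rpow_add_one_sq {s : ℝ} (hs : -1 < s) :
    ∫ x in (0:ℝ)..1, x ^ s / (x ^ (s + 1) + 1) ^ 2 = 1 / (2 * (s + 1)) := by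
  have hs₁ : 0 < s + 1 := by linarith
  set g : ℝ → ℝ := fun x => -(x ^ (s + 1) + 1)⁻¹ / (s + 1)
  have hcont : ContinuousOn g (Icc 0 1) := by
    refine ContinuousOn.div_const (ContinuousOn.neg (ContinuousOn.inv₀ ?_ ?_)) _
    · exact (continuous_id.rpow_const fun _ => Or.inr hs₁.le).continuousOn.add continuousOn_const
    · intro x hx
      have := Real.rpow_nonneg hx.1 (s + 1)
      positivity
  have hderiv : ∀ x ∈ Ioo (0:ℝ) 1, HasDerivAt g (x ^ s / (x ^ (s + 1) + 1) ^ 2) x := by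
    intro x hx
    have hx₀ : 0 < x := hx.1
    have h := ((Real.hasDerivAt_rpow_const (p := s + 1) (Or.inl hx₀.ne')).add_const 1).inv
      (by positivity)
    refine (h.neg.div_const _).congr_deriv ?_
    rw [add_sub_cancel_right]
    field_simp
  have hnonneg : ∀ x ∈ Ioo (0:ℝ) 1, 0 ≤ x ^ s / (x ^ (s + 1) + 1) ^ 2 := fun x hx => by
    have := hx.1
    positivity
  rw [integral_eq_sub_of_hasDerivAt_of_le zero_le_one hcont hderiv
    ((intervalIntegrable_iff_integrableOn_Ioc_of_le zero_le_one).2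
      (integrableOn_deriv_of_nonneg hcont hderiv hnonneg))]
  simp only [g, Real.one_rpow, Real.zero_rpow hs₁.ne']
  field_simp
  ring

theorem integrableOn_rpow_div_rpow_add_one_sq {p m : ℝ} (hp : -1 < p) (hm : -1 < m) :
    IntegrableOn (fun z : ℝ × ℝ => z.1 ^ z.2 / (z.1 ^ (z.2 + 1) + 1) ^ 2)
      (Ioc 0 1 ×ˢ uIoc p m) := by
  have hmeas : MeasurableSet (Ioc (0:ℝ) 1 ×ˢ uIoc p m) :=
    measurableSet_Ioc.prod measurableSet_uIoc
  have hdom : IntegrableOn (fun z : ℝ × ℝ => z.1 ^ min p m * 1) (Ioc 0 1 ×ˢ uIoc p m) := by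
    rw [IntegrableOn, Measure.volume_eq_prod, ← Measure.prod_restrict]
    exact (intervalIntegrable_rpow' (lt_min hp hm)).1.mul_prod (integrableOn_const (by simp))
  refine hdom.mono' ?_ (ae_restrict_of_forall_mem hmeas ?_)
  · refine ContinuousOn.aestronglyMeasurable
      (fun z hz => ContinuousAt.continuousWithinAt ?_) hmeas
    have hx₀ : z.1 ≠ 0 := hz.1.1.ne'
    have := Real.rpow_nonneg hz.1.1.le (z.2 + 1)
    exact (continuousAt_fst.rpow continuousAt_snd (Or.inl hx₀)).div
      (((continuousAt_fst.rpow (continuousAt_snd.add continuousAt_const) (Or.inl hx₀)).add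
        continuousAt_const).pow 2) (by positivity)
  · rintro ⟨x, s⟩ ⟨⟨hx₀, hx₁⟩, hs, -⟩
    have hden : 1 ≤ (x ^ (s + 1) + 1) ^ 2 :=
      one_le_pow₀ (by linarith [Real.rpow_nonneg hx₀.le (s + 1)])
    rw [Real.norm_of_nonneg (by positivity), mul_one]
    exact (div_le_self (by positivity) hden).trans
      (Real.rpow_le_rpow_of_exponent_ge hx₀ hx₁ hs.le)

theorem integral_rpow_sub_div_add_one_mul_log (m p : ℝ) (hm : -1 < m) (hp : -1 < p) :
    ∫ x in (0:ℝ)..1,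
        (x ^ m - x ^ p) / ((x ^ (m + 1) + 1) * (x ^ (p + 1) + 1) * Real.log x) =
      (1 / 2) * Real.log ((m + 1) / (p + 1)) := by
  calc _ = ∫ x in (0:ℝ)..1, ∫ s in p..m, x ^ s / (x ^ (s + 1) + 1) ^ 2 := by
        refine integral_congr_ae ?_
        filter_upwards [Measure.ae_ne volume 1] with x hx₁ hx
        rw [uIoc_of_le zero_le_one] at hx
        exact (integral_const_rpow_div_const_rpow_add_one_sq hx.1 hx₁ p m).symm
    _ = ∫ s in p..m, ∫ x in (0:ℝ)..1, x ^ s / (x ^ (s + 1) + 1) ^ 2 :=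
        intervalIntegral_intervalIntegral_swap <| by
          rw [uIoc_of_le zero_le_one]
          exact integrableOn_rpow_div_rpow_add_one_sq hp hm
    _ = ∫ s in p..m, 1 / 2 * (s + 1)⁻¹ := by
        refine integral_congr fun s hs => ?_
        rw [integral_rpow_div_rpow_add_one_sq (lt_min hp hm |>.trans_le hs.1), one_div,
          mul_inv, one_div]
    _ = 1 / 2 * Real.log ((m + 1) / (p + 1)) := by
        rw [intervalIntegral.integral_const_mul, integral_comp_add_right (fun s => s⁻¹),
          integral_inv_of_pos (by linarith) (by linarith)]
end

section
/- For all real numbers n > -1 and p > -1, the integral over x from 0 to 1 of (log x)^2 * (x^n - x^p) / ((x^(n+1) - 1)(x^(p+1) - 1)) dx equals 2 * ζ(3) * (1/(n+1)^3 - 1/(p+1)^3). -/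
open Real Set Filter Topology MeasureTheory intervalIntegral

/-!
For `b > -1`, expanding `1 / (1 - x ^ (b + 1))` as a geometric series gives
`∫₀¹ x ^ b log² x / (1 - x ^ (b + 1)) dx = ∑ₖ ∫₀¹ x ^ ((b + 1)(k + 1) - 1) log² x dx
  = ∑ₖ 2 / ((b + 1)(k + 1))³ = 2 ζ(3) / (b + 1)³`,
the interchange being legitimate because all terms are nonnegative. By partial fractions the
integrand of the theorem is the difference of these integrands for `b = n` and `b = p`.
-/

lemma tendsto_log_sq_mul_rpow_nhdsGT_zero {r : ℝ} (hr : 0 < r) :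
    Tendsto (fun x => log x ^ 2 * x ^ r) (𝓝[>] 0) (𝓝 0) := by
  have h := (tendsto_log_mul_rpow_nhdsGT_zero (half_pos hr)).pow 2
  rw [zero_pow two_ne_zero] at h
  refine h.congr' ?_
  filter_upwards [self_mem_nhdsWithin] with x (hx : 0 < x)
  rw [mul_pow, ← rpow_mul_natCast hx.le]
  norm_num

noncomputable def rpowMulLogSqAntideriv (b x : ℝ) : ℝ :=
  log x ^ 2 * x ^ (b + 1) / (b + 1) - 2 * (log x * x ^ (b + 1)) / (b + 1) ^ 2 +
    2 * x ^ (b + 1) / (b + 1) ^ 3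

lemma hasDerivAt_rpowMulLogSqAntideriv {b x : ℝ} (hb : b + 1 ≠ 0) (hx : 0 < x) :
    HasDerivAt (rpowMulLogSqAntideriv b) (x ^ b * log x ^ 2) x := by
  have hpow : HasDerivAt (fun x => x ^ (b + 1)) ((b + 1) * x ^ b) x := by
    simpa using hasDerivAt_rpow_const (p := b + 1) (Or.inl hx.ne')
  have hlog := hasDerivAt_log hx.ne'
  refine (((((hlog.pow 2).mul hpow).div_const (b + 1)).sub
    (((hlog.mul hpow).const_mul 2).div_const ((b + 1) ^ 2))).add
    ((hpow.const_mul 2).div_const ((b + 1) ^ 3))).congr_deriv ?_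
  have hxb : x ^ (b + 1) = x ^ b * x := by rw [rpow_add hx, rpow_one]
  rw [Pi.pow_apply, hxb]
  field_simp
  ring

lemma continuousOn_rpowMulLogSqAntideriv {b : ℝ} (hb : -1 < b) :
    ContinuousOn (rpowMulLogSqAntideriv b) (Ici 0) := by
  have hc : 0 < b + 1 := by linarith
  intro x hx
  rcases (mem_Ici.1 hx).eq_or_lt with rfl | hx
  · refine continuousWithinAt_Ioi_iff_Ici.1 ?_
    have hpow : Tendsto (fun x : ℝ => x ^ (b + 1)) (𝓝[>] 0) (𝓝 0) := by
      simpa [zero_rpow hc.ne'] using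
        (continuousAt_rpow_const 0 (b + 1) (Or.inr hc.le)).continuousWithinAt.tendsto
    have h := (((tendsto_log_sq_mul_rpow_nhdsGT_zero hc).div_const (b + 1)).sub
      (((tendsto_log_mul_rpow_nhdsGT_zero hc).const_mul 2).div_const ((b + 1) ^ 2))).add
      ((hpow.const_mul 2).div_const ((b + 1) ^ 3))
    simp only [zero_div, mul_zero, sub_zero, add_zero] at h
    have h0 : rpowMulLogSqAntideriv b 0 = 0 := by simp [rpowMulLogSqAntideriv, zero_rpow hc.ne']
    rwa [ContinuousWithinAt, h0]
  · exact (hasDerivAt_rpowMulLogSqAntideriv hc.ne' hx).continuousAt.continuousWithinAt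

lemma integrableOn_rpow_mul_log_sq {b : ℝ} (hb : -1 < b) :
    IntegrableOn (fun x => x ^ b * log x ^ 2) (Ioc 0 1) :=
  integrableOn_deriv_of_nonneg ((continuousOn_rpowMulLogSqAntideriv hb).mono Icc_subset_Ici_self)
    (fun _ hx => hasDerivAt_rpowMulLogSqAntideriv (by linarith) hx.1)
    (fun _ hx => mul_nonneg (rpow_nonneg hx.1.le _) (sq_nonneg _))

lemma integral_rpow_mul_log_sq {b : ℝ} (hb : -1 < b) :
    ∫ x in (0 : ℝ)..1, x ^ b * log x ^ 2 = 2 / (b + 1) ^ 3 := by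
  rw [integral_eq_sub_of_hasDerivAt_of_le zero_le_one
    ((continuousOn_rpowMulLogSqAntideriv hb).mono Icc_subset_Ici_self)
    (fun _ hx => hasDerivAt_rpowMulLogSqAntideriv (by linarith) hx.1)
    ((intervalIntegrable_iff_integrableOn_Ioc_of_le zero_le_one).2
      (integrableOn_rpow_mul_log_sq hb))]
  simp [rpowMulLogSqAntideriv, zero_rpow (by linarith : b + 1 ≠ 0)]

lemma hasSum_rpow_mul_log_sq_div_one_sub_rpow {b x : ℝ} (hb : -1 < b) (hx : x ∈ Ioc 0 1) :
    HasSum (fun k : ℕ => x ^ ((b + 1) * (k + 1) - 1) * log x ^ 2)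
      (x ^ b * log x ^ 2 / (1 - x ^ (b + 1))) := by
  rcases hx.2.eq_or_lt with rfl | hx1
  · simp
  have hr := (hasSum_geometric_of_lt_one (rpow_nonneg hx.1.le (b + 1))
    (rpow_lt_one hx.1.le hx1 (by linarith))).mul_left (x ^ b * log x ^ 2)
  have hterm (k : ℕ) : x ^ ((b + 1) * (k + 1) - 1) * log x ^ 2 =
      x ^ b * log x ^ 2 * (x ^ (b + 1)) ^ k := by
    rw [← rpow_mul_natCast hx.1.le, mul_right_comm, ← rpow_add hx.1]
    ring_nf
  simpa only [hterm, div_eq_mul_inv] using hr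

lemma summable_one_div_nat_add_one_pow_three :
    Summable (fun k : ℕ => 1 / ((k : ℝ) + 1) ^ 3) := by
  simpa using (summable_nat_add_iff 1).2 (Real.summable_one_div_nat_pow.2 (by norm_num : 1 < 3))

lemma integral_rpow_mul_log_sq_div_one_sub_rpow {b : ℝ} (hb : -1 < b) :
    ∫ x in (0 : ℝ)..1, x ^ b * log x ^ 2 / (1 - x ^ (b + 1)) =
      2 / (b + 1) ^ 3 * ∑' k : ℕ, 1 / ((k : ℝ) + 1) ^ 3 := by
  let F (k : ℕ) (x : ℝ) : ℝ := x ^ ((b + 1) * (k + 1) - 1) * log x ^ 2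
  have hexp (k : ℕ) : -1 < (b + 1) * (k + 1) - 1 := by
    have : 0 < (b + 1) * (k + 1) := mul_pos (by linarith) k.cast_add_one_pos
    linarith
  have hF (k : ℕ) :
      ∫ x in Ioc (0 : ℝ) 1, F k x = 2 / (b + 1) ^ 3 * (1 / ((k : ℝ) + 1) ^ 3) := by
    rw [← integral_of_le zero_le_one, integral_rpow_mul_log_sq (hexp k), sub_add_cancel, mul_pow,
      div_mul_div_comm, mul_one]
  have hFnorm (k : ℕ) : ∫ x in Ioc (0 : ℝ) 1, ‖F k x‖ = ∫ x in Ioc (0 : ℝ) 1, F k x :=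
    setIntegral_congr_fun measurableSet_Ioc fun x hx =>
      norm_of_nonneg (mul_nonneg (rpow_nonneg hx.1.le _) (sq_nonneg _))
  have hsummable : Summable fun k => ∫ x in Ioc (0 : ℝ) 1, ‖F k x‖ :=
    (summable_one_div_nat_add_one_pow_three.mul_left _).congr fun k => by rw [hFnorm, hF]
  calc ∫ x in (0 : ℝ)..1, x ^ b * log x ^ 2 / (1 - x ^ (b + 1))
      = ∫ x in Ioc (0 : ℝ) 1, ∑' k, F k x := by
        rw [integral_of_le zero_le_one]
        exact setIntegral_congr_fun measurableSet_Ioc fun x hx =>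
          (hasSum_rpow_mul_log_sq_div_one_sub_rpow hb hx).tsum_eq.symm
    _ = ∑' k, ∫ x in Ioc (0 : ℝ) 1, F k x :=
        (integral_tsum_of_summable_integral_norm
          (fun k => integrableOn_rpow_mul_log_sq (hexp k)) hsummable).symm
    _ = _ := by rw [← tsum_mul_left]; exact tsum_congr hF

-- A non-integrable function has integral `0`, so a nonzero integral certifies integrability.
lemma intervalIntegrable_rpow_mul_log_sq_div_one_sub_rpow {b : ℝ} (hb : -1 < b) :
    IntervalIntegrable (fun x => x ^ b * log x ^ 2 / (1 - x ^ (b + 1))) volume 0 1 := by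
  refine intervalIntegrable_of_integral_ne_zero ?_
  rw [integral_rpow_mul_log_sq_div_one_sub_rpow hb]
  have hc : 0 < b + 1 := by linarith
  exact (mul_pos (by positivity) (summable_one_div_nat_add_one_pow_three.tsum_pos
    (fun _ => by positivity) 0 (by norm_num))).ne'

lemma riemannZeta_three_eq_tsum :
    riemannZeta 3 = ((∑' k : ℕ, 1 / ((k : ℝ) + 1) ^ 3 : ℝ) : ℂ) := by
  rw [zeta_eq_tsum_one_div_nat_add_one_cpow (by norm_num), Complex.ofReal_tsum]
  refine tsum_congr fun k => ?_
  rw [show (3 : ℂ) = ((3 : ℕ) : ℂ) by norm_num, Complex.cpow_natCast]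
  push_cast
  rfl

lemma log_sq_mul_rpow_sub_div_eq {n p x : ℝ} (hn : -1 < n) (hp : -1 < p) (hx : x ∈ Ioc 0 1) :
    log x ^ 2 * (x ^ n - x ^ p) / ((x ^ (n + 1) - 1) * (x ^ (p + 1) - 1)) =
      x ^ n * log x ^ 2 / (1 - x ^ (n + 1)) - x ^ p * log x ^ 2 / (1 - x ^ (p + 1)) := by
  rcases hx.2.eq_or_lt with rfl | hx1
  · simp
  have hn' : x ^ (n + 1) - 1 ≠ 0 := (sub_neg.2 (rpow_lt_one hx.1.le hx1 (by linarith))).ne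
  have hp' : x ^ (p + 1) - 1 ≠ 0 := (sub_neg.2 (rpow_lt_one hx.1.le hx1 (by linarith))).ne
  rw [← neg_sub (x ^ (n + 1)), ← neg_sub (x ^ (p + 1)), div_neg, div_neg,
    neg_sub_neg, div_sub_div _ _ hp' hn',
    div_eq_div_iff (mul_ne_zero hn' hp') (mul_ne_zero hp' hn'),
    rpow_add hx.1, rpow_add hx.1, rpow_one]
  ring

theorem integral_log_sq_mul_rpow_sub_div_sub_one (n p : ℝ) (hn : -1 < n) (hp : -1 < p) :
    ((∫ x in (0:ℝ)..1,
        (Real.log x) ^ 2 * (x ^ n - x ^ p) /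
          ((x ^ (n + 1) - 1) * (x ^ (p + 1) - 1)) : ℝ) : ℂ) =
      2 * riemannZeta 3 * (1 / ((n : ℂ) + 1) ^ 3 - 1 / ((p : ℂ) + 1) ^ 3) := by
  rw [integral_congr_ae (ae_of_all _ fun x hx =>
      log_sq_mul_rpow_sub_div_eq hn hp (by rwa [uIoc_of_le zero_le_one] at hx)),
    integral_sub (intervalIntegrable_rpow_mul_log_sq_div_one_sub_rpow hn)
      (intervalIntegrable_rpow_mul_log_sq_div_one_sub_rpow hp),
    integral_rpow_mul_log_sq_div_one_sub_rpow hn, integral_rpow_mul_log_sq_div_one_sub_rpow hp,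
    riemannZeta_three_eq_tsum]
  push_cast
  ring
end

section
/- The integral over x from 0 to 1 of log(x) * log(1 - x^2) * Log(log x) / x dx, where Log denotes the principal-branch complex logarithm (so Log(log x) = log(-log x) + iπ for 0 < x < 1), equals (1/4) * ( ζ'(3) + ζ(3) * (1 - γ + iπ - log 2) ). -/
/-!
Substituting `x = e^{-t}` turns the integral into `∫₀^∞ -t log(1 - e^{-2t}) Log(-t) dt`,
where `Log(-t) = log t + iπ`. Expanding `-log(1 - e^{-2t}) = ∑ₙ e^{-2nt}/n` and integrating
termwise with `∫₀^∞ t e^{-at} (log t + iπ) dt = (1 - γ - log a + iπ)/a²` (a rescaling of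
`Γ'(2) = 1 - γ`) gives `∑ₙ (1 - γ - log 2 - log n + iπ)/(4n³)`, and `∑ₙ log n/n³ = -ζ'(3)`.
Termwise integration is justified by `‖t (log t + iπ)‖ ≤ t² + πt + 1`, which makes the
integrated norms `O(1/n²)`.
-/

open Real MeasureTheory Set
open scoped Nat

section GammaIntegrals

variable {a : ℝ}

lemma integral_pow_mul_exp_neg_mul (k : ℕ) (ha : 0 < a) :
    ∫ t in Ioi (0 : ℝ), t ^ k * exp (-(a * t)) = k ! / a ^ (k + 1) := by
  have h := Real.integral_rpow_mul_exp_neg_mul_Ioi (a := k + 1) (by positivity) ha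
  rw [add_sub_cancel_right, Real.Gamma_nat_eq_factorial, ← Nat.cast_add_one, Real.rpow_natCast,
    one_div_pow, one_div_mul_eq_div] at h
  rw [← h]
  refine setIntegral_congr_fun measurableSet_Ioi fun t _ ↦ ?_
  rw [Real.rpow_natCast]

lemma integrableOn_pow_mul_exp_neg_mul (k : ℕ) (ha : 0 < a) :
    IntegrableOn (fun t ↦ t ^ k * exp (-(a * t))) (Ioi 0) :=
  Integrable.of_integral_ne_zero <| by
    rw [integral_pow_mul_exp_neg_mul k ha]; positivity

lemma abs_mul_log_le (t : ℝ) : |t * log t| ≤ t ^ 2 + 1 := by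
  rw [abs_mul, ← log_abs, ← sq_abs]
  rcases (abs_nonneg t).eq_or_lt with h | h
  · simp [← h]
  have h₁ := log_le_sub_one_of_pos h
  have h₂ := one_sub_inv_le_log_of_pos h
  have h₃ : |t| * (1 - |t|⁻¹) = |t| - 1 := by field_simp
  rcases abs_cases (log |t|) with ⟨h, -⟩ | ⟨h, -⟩ <;> rw [h] <;> nlinarith

lemma integrableOn_mul_log_mul_exp_neg_mul (ha : 0 < a) :
    IntegrableOn (fun t ↦ t * log t * exp (-(a * t))) (Ioi 0) := by
  refine ((integrableOn_pow_mul_exp_neg_mul 2 ha).add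
    (integrableOn_pow_mul_exp_neg_mul 0 ha)).mono' ?_ ?_
  · exact (by fun_prop : Continuous fun t ↦ t * log t * exp (-(a * t))).aestronglyMeasurable
  · refine ae_of_all _ fun t ↦ ?_
    rw [norm_mul, norm_of_nonneg (exp_pos _).le, Pi.add_apply, pow_zero, one_mul, ← add_one_mul]
    gcongr
    exact abs_mul_log_le t

lemma integral_mul_log_mul_exp_neg :
    ∫ t in Ioi (0 : ℝ), t * log t * exp (-t) = 1 - eulerMascheroniConstant := by
  have hGamma : deriv Complex.Gamma 2 = 1 - (eulerMascheroniConstant : ℂ) := by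
    have h := Complex.deriv_Gamma_nat 1
    norm_num [harmonic_succ] at h
    rw [h]; ring
  have hIntegral : deriv Complex.Gamma 2 =
      ∫ t in Ioi (0 : ℝ), (t : ℂ) ^ ((2 : ℂ) - 1) * (log t * exp (-t)) := by
    have hRe : (0 : ℝ) < (2 : ℂ).re := by simp
    rw [← (Complex.hasDerivAt_GammaIntegral hRe).deriv]
    refine Filter.EventuallyEq.deriv_eq ?_
    filter_upwards [(isOpen_lt continuous_const Complex.continuous_re).mem_nhds hRe] with s hs
    exact Complex.Gamma_eq_integral hs
  have hReal : ∫ t in Ioi (0 : ℝ), (t : ℂ) ^ ((2 : ℂ) - 1) * (log t * exp (-t)) =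
      ((∫ t in Ioi (0 : ℝ), t * log t * exp (-t) : ℝ) : ℂ) := by
    rw [← integral_complex_ofReal]
    exact setIntegral_congr_fun measurableSet_Ioi fun t _ ↦ by norm_num [mul_assoc]
  exact_mod_cast ((hGamma.symm.trans hIntegral).trans hReal).symm

lemma integral_mul_log_mul_exp_neg_mul (ha : 0 < a) :
    ∫ t in Ioi (0 : ℝ), t * log t * exp (-(a * t)) =
      (1 - eulerMascheroniConstant - log a) / a ^ 2 := by
  have hScale := integral_comp_mul_left_Ioi (fun s ↦ s * log s * exp (-s)) 0 ha
  rw [mul_zero, integral_mul_log_mul_exp_neg, smul_eq_mul] at hScale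
  have hSplit : EqOn (fun t ↦ a * t * log (a * t) * exp (-(a * t)))
      (fun t ↦ a * log a * (t ^ 1 * exp (-(a * t))) + a * (t * log t * exp (-(a * t))))
      (Ioi 0) := fun t ht ↦ by
    simp only [log_mul ha.ne' (ne_of_gt ht)]; ring
  rw [setIntegral_congr_fun measurableSet_Ioi hSplit,
    integral_add ((integrableOn_pow_mul_exp_neg_mul 1 ha).const_mul _)
      ((integrableOn_mul_log_mul_exp_neg_mul ha).const_mul _),
    integral_const_mul, integral_const_mul, integral_pow_mul_exp_neg_mul 1 ha] at hScale
  rw [eq_div_iff (by positivity)]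
  field_simp at hScale
  norm_num [ha.ne'] at hScale
  linear_combination hScale

end GammaIntegrals

open Complex in
lemma Complex.log_neg_ofReal_of_pos {t : ℝ} (ht : 0 < t) :
    Complex.log (-t) = Real.log t + π * I := by
  rw [← neg_one_mul, mul_comm, log_ofReal_mul ht (by norm_num), log_neg_one]

section LogKernel

open Complex (I)

variable {a : ℝ}

lemma norm_mul_log_add_pi_mul_I_le {t : ℝ} (ht : 0 ≤ t) :
    ‖(t : ℂ) * (log t + π * I)‖ ≤ t ^ 2 + π * t + 1 := by
  calc ‖(t : ℂ) * (log t + π * I)‖ = ‖((t * log t : ℝ) : ℂ) + ((π * t : ℝ) : ℂ) * I‖ := by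
        push_cast; ring_nf
    _ ≤ |t * log t| + π * t := by
        refine (norm_add_le _ _).trans_eq ?_
        rw [norm_mul, Complex.norm_I, mul_one, Complex.norm_real, Complex.norm_real, norm_eq_abs,
          norm_of_nonneg (by positivity)]
    _ ≤ t ^ 2 + π * t + 1 := by linarith [abs_mul_log_le t]

-- The powers `t ^ 1`, `t ^ 0` match `integral_pow_mul_exp_neg_mul`.
lemma norm_mul_exp_neg_mul_mul_log_add_pi_mul_I_le {t : ℝ} (ht : 0 ≤ t) :
    ‖((t * exp (-(a * t)) : ℝ) : ℂ) * (log t + π * I)‖ ≤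
      t ^ 2 * exp (-(a * t)) + π * (t ^ 1 * exp (-(a * t))) + t ^ 0 * exp (-(a * t)) := by
  calc ‖((t * exp (-(a * t)) : ℝ) : ℂ) * (log t + π * I)‖
        = exp (-(a * t)) * ‖(t : ℂ) * (log t + π * I)‖ := by
        rw [show ((t * exp (-(a * t)) : ℝ) : ℂ) * (log t + π * I) =
            ((exp (-(a * t)) : ℝ) : ℂ) * ((t : ℂ) * (log t + π * I)) by push_cast; ring,
          norm_mul, Complex.norm_real, norm_of_nonneg (exp_pos _).le]
    _ ≤ exp (-(a * t)) * (t ^ 2 + π * t + 1) := by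
        gcongr; exact norm_mul_log_add_pi_mul_I_le ht
    _ = _ := by ring

lemma integrableOn_mul_exp_neg_mul_mul_log_add_pi_mul_I (ha : 0 < a) :
    IntegrableOn (fun t : ℝ ↦ ((t * exp (-(a * t)) : ℝ) : ℂ) * (log t + π * I)) (Ioi 0) := by
  refine (((integrableOn_pow_mul_exp_neg_mul 2 ha).add
    ((integrableOn_pow_mul_exp_neg_mul 1 ha).const_mul π)).add
      (integrableOn_pow_mul_exp_neg_mul 0 ha)).mono' (by fun_prop) ?_
  filter_upwards [ae_restrict_mem measurableSet_Ioi] with t ht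
  exact norm_mul_exp_neg_mul_mul_log_add_pi_mul_I_le (le_of_lt ht)

lemma integral_norm_mul_exp_neg_mul_mul_log_add_pi_mul_I_le (ha : 0 < a) :
    ∫ t in Ioi (0 : ℝ), ‖((t * exp (-(a * t)) : ℝ) : ℂ) * (log t + π * I)‖ ≤
      2 / a ^ 3 + π / a ^ 2 + 1 / a := by
  have h₂ := integrableOn_pow_mul_exp_neg_mul 2 ha
  have h₁ := (integrableOn_pow_mul_exp_neg_mul 1 ha).const_mul π
  have h₀ := integrableOn_pow_mul_exp_neg_mul 0 ha
  have h₂₁ : IntegrableOn (fun t ↦ t ^ 2 * exp (-(a * t)) + π * (t ^ 1 * exp (-(a * t))))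
      (Ioi 0) := h₂.add h₁
  refine (setIntegral_mono_on (integrableOn_mul_exp_neg_mul_mul_log_add_pi_mul_I ha).norm
    (h₂₁.add h₀) measurableSet_Ioi fun t ht ↦
      norm_mul_exp_neg_mul_mul_log_add_pi_mul_I_le (le_of_lt ht)).trans_eq ?_
  simp only [Pi.add_apply]
  rw [integral_add h₂₁ h₀, integral_add h₂ h₁, integral_const_mul,
    integral_pow_mul_exp_neg_mul 2 ha, integral_pow_mul_exp_neg_mul 1 ha,
    integral_pow_mul_exp_neg_mul 0 ha]
  norm_num [div_eq_mul_inv]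

lemma integral_mul_exp_neg_mul_mul_log_add_pi_mul_I (ha : 0 < a) :
    ∫ t in Ioi (0 : ℝ), ((t * exp (-(a * t)) : ℝ) : ℂ) * (log t + π * I) =
      ((1 - eulerMascheroniConstant - log a : ℝ) + π * I) / a ^ 2 := by
  have hLog : IntegrableOn (fun t : ℝ ↦ ((t * log t * exp (-(a * t)) : ℝ) : ℂ)) (Ioi 0) :=
    (integrableOn_mul_log_mul_exp_neg_mul ha).ofReal
  have hPi : IntegrableOn (fun t : ℝ ↦ π * I * ((t ^ 1 * exp (-(a * t)) : ℝ) : ℂ)) (Ioi 0) :=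
    (integrableOn_pow_mul_exp_neg_mul 1 ha).ofReal.const_mul _
  have hSplit : ∀ t : ℝ, ((t * exp (-(a * t)) : ℝ) : ℂ) * (log t + π * I) =
      ((t * log t * exp (-(a * t)) : ℝ) : ℂ) + π * I * ((t ^ 1 * exp (-(a * t)) : ℝ) : ℂ) :=
    fun t ↦ by push_cast; ring
  simp_rw [hSplit]
  rw [integral_add hLog hPi, integral_const_mul, integral_complex_ofReal,
    integral_complex_ofReal, integral_mul_log_mul_exp_neg_mul ha, integral_pow_mul_exp_neg_mul 1 ha]
  push_cast [Nat.factorial_one]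
  ring

end LogKernel

lemma LSeriesHasSum.hasSum_nat_add_one {f : ℕ → ℂ} {s a : ℂ} (h : LSeriesHasSum f s a) :
    HasSum (fun n : ℕ ↦ f (n + 1) / ((n : ℂ) + 1) ^ s) a := by
  simpa using (hasSum_nat_add_iff' 1).mpr h

lemma hasSum_one_div_nat_add_one_cpow_riemannZeta {s : ℂ} (hs : 1 < s.re) :
    HasSum (fun n : ℕ ↦ 1 / ((n : ℂ) + 1) ^ s) (riemannZeta s) :=
  (LSeriesHasSum_one hs).hasSum_nat_add_one

lemma hasSum_log_div_nat_add_one_cpow_neg_deriv_riemannZeta {s : ℂ} (hs : 1 < s.re) :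
    HasSum (fun n : ℕ ↦ Complex.log ((n : ℂ) + 1) / ((n : ℂ) + 1) ^ s)
      (-deriv riemannZeta s) := by
  have hAbscissa : LSeries.abscissaOfAbsConv 1 < s.re := by
    rw [LSeries.abscissaOfAbsConv_one]; exact_mod_cast hs
  have hDeriv : deriv riemannZeta s = deriv (LSeries 1) s :=
    Filter.EventuallyEq.deriv_eq <| by
      filter_upwards [(isOpen_lt continuous_const Complex.continuous_re).mem_nhds hs] with z hz
      exact (LSeries_one_eq_riemannZeta hz).symm
  rw [hDeriv, LSeries_deriv hAbscissa, neg_neg]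
  simpa [LSeries.logMul] using
    (LSeriesSummable_logMul_of_lt_re hAbscissa).LSeriesHasSum.hasSum_nat_add_one

lemma summable_one_div_nat_add_one_pow {k : ℕ} (hk : 1 < k) :
    Summable fun n : ℕ ↦ 1 / ((n : ℝ) + 1) ^ k := by
  simpa using (summable_nat_add_iff 1).mpr (Real.summable_one_div_nat_pow.mpr hk)

section LogSeries

open Complex (I)

variable {c : ℝ}

lemma hasSum_mul_exp_neg_mul_div (hc : 0 < c) {t : ℝ} (ht : 0 < t) :
    HasSum (fun n : ℕ ↦ t * exp (-(c * (n + 1) * t)) / (n + 1))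
      (-(t * log (1 - exp (-(c * t))))) := by
  have hx : |exp (-(c * t))| < 1 := by
    rw [abs_of_pos (exp_pos _), exp_lt_one_iff]; exact neg_neg_of_pos (mul_pos hc ht)
  have hTerm (n : ℕ) :
      t * exp (-(c * (n + 1) * t)) / (n + 1) = t * (exp (-(c * t)) ^ (n + 1) / (n + 1)) := by
    rw [← exp_nat_mul]; push_cast; ring_nf
  rw [funext hTerm]
  simpa only [mul_neg] using (hasSum_pow_div_log_of_abs_lt_one hx).mul_left t

lemma summable_integral_norm_log_series (hc : 0 < c) :
    Summable fun n : ℕ ↦ ∫ t in Ioi (0 : ℝ),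
      ‖((t * exp (-(c * (n + 1) * t)) : ℝ) : ℂ) * (log t + π * I) / ((n : ℂ) + 1)‖ := by
  have hBound :=
    (((summable_one_div_nat_add_one_pow (k := 4) (by norm_num)).mul_left (2 / c ^ 3)).add
      ((summable_one_div_nat_add_one_pow (k := 3) (by norm_num)).mul_left (π / c ^ 2))).add
        ((summable_one_div_nat_add_one_pow (k := 2) (by norm_num)).mul_left (1 / c))
  refine hBound.of_nonneg_of_le (fun n ↦ integral_nonneg fun _ ↦ norm_nonneg _) fun n ↦ ?_
  have ha : 0 < c * (n + 1) := by positivity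
  have hn : ‖(n : ℂ) + 1‖ = n + 1 := by norm_cast
  simp_rw [norm_div, integral_div, hn]
  calc (∫ t in Ioi (0 : ℝ), ‖((t * exp (-(c * (n + 1) * t)) : ℝ) : ℂ) * (log t + π * I)‖) /
        (n + 1)
      ≤ (2 / (c * (n + 1)) ^ 3 + π / (c * (n + 1)) ^ 2 + 1 / (c * (n + 1))) / (n + 1) := by
        gcongr; exact integral_norm_mul_exp_neg_mul_mul_log_add_pi_mul_I_le ha
    _ = _ := by field_simp

lemma hasSum_integral_log_series (hc : 0 < c) :
    HasSum (fun n : ℕ ↦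
        (((1 - eulerMascheroniConstant - log (c * (n + 1)) : ℝ) + π * I) /
          ((c * (n + 1) : ℝ) : ℂ) ^ 2) / ((n : ℂ) + 1))
      (∫ t in Ioi (0 : ℝ), ((-(t * log (1 - exp (-(c * t)))) : ℝ) : ℂ) * (log t + π * I)) := by
  have h := hasSum_integral_of_summable_integral_norm
    (fun n ↦ (integrableOn_mul_exp_neg_mul_mul_log_add_pi_mul_I (by positivity)).div_const _)
    (summable_integral_norm_log_series hc)
  have hTerm (n : ℕ) := integral_mul_exp_neg_mul_mul_log_add_pi_mul_I (a := c * (n + 1))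
    (by positivity)
  simp only [integral_div, hTerm] at h
  have hPoint : ∀ t ∈ Ioi (0 : ℝ),
      ((-(t * log (1 - exp (-(c * t)))) : ℝ) : ℂ) * (log t + π * I) =
        ∑' n : ℕ,
          ((t * exp (-(c * (n + 1) * t)) : ℝ) : ℂ) * (log t + π * I) / ((n : ℂ) + 1) := by
    intro t ht
    refine (HasSum.tsum_eq ?_).symm
    refine ((Complex.hasSum_ofReal.mpr (hasSum_mul_exp_neg_mul_div hc ht)).mul_right
      ((log t : ℂ) + π * I)).congr_fun fun n ↦ ?_
    push_cast; ring
  rwa [setIntegral_congr_fun measurableSet_Ioi hPoint]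

theorem integral_neg_mul_log_one_sub_exp_neg_mul_mul_log_add_pi_mul_I (hc : 0 < c) :
    ∫ t in Ioi (0 : ℝ), ((-(t * log (1 - exp (-(c * t)))) : ℝ) : ℂ) * (log t + π * I) =
      (deriv riemannZeta 3 +
        riemannZeta 3 * (1 - (eulerMascheroniConstant : ℂ) + π * I - (log c : ℂ))) /
        (c : ℂ) ^ 2 := by
  have hZeta := hasSum_one_div_nat_add_one_cpow_riemannZeta (s := 3) (by norm_num)
  have hDeriv := hasSum_log_div_nat_add_one_cpow_neg_deriv_riemannZeta (s := 3) (by norm_num)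
  refine ((hasSum_integral_log_series hc).unique (((hZeta.mul_left
    (((1 - eulerMascheroniConstant - log c : ℝ) + π * I) / c ^ 2)).sub
      (hDeriv.mul_left (1 / (c : ℂ) ^ 2))).congr_fun fun n ↦ ?_)).trans ?_
  swap
  · push_cast; ring
  have hn : (0 : ℝ) < n + 1 := by positivity
  rw [log_mul hc.ne' hn.ne', ← Complex.ofReal_natCast, ← Complex.ofReal_one,
    ← Complex.ofReal_add, ← Complex.ofReal_log hn.le, Complex.cpow_ofNat]
  have : (c : ℂ) ≠ 0 := by exact_mod_cast hc.ne'
  have : ((n : ℝ) + 1 : ℂ) ≠ 0 := by exact_mod_cast hn.ne'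
  push_cast
  field_simp
  ring

end LogSeries

lemma integral_Ioo_zero_one_eq_integral_Ioi_exp_neg_smul {E : Type*} [NormedAddCommGroup E]
    [NormedSpace ℝ E] (f : ℝ → E) :
    ∫ x in Ioo (0 : ℝ) 1, f x = ∫ t in Ioi (0 : ℝ), exp (-t) • f (exp (-t)) := by
  have hImage : (fun t ↦ exp (-t)) '' Ioi 0 = Ioo (0 : ℝ) 1 := by
    rw [← exp_zero, ← image_exp_Iio, ← neg_zero, ← image_neg_Ioi, image_image, neg_zero]
  have hDeriv (t : ℝ) (_ : t ∈ Ioi (0 : ℝ)) :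
      HasDerivWithinAt (fun t ↦ exp (-t)) (-exp (-t)) (Ioi 0) t := by
    simpa using ((hasDerivAt_neg t).exp).hasDerivWithinAt
  have hInj : InjOn (fun t ↦ exp (-t)) (Ioi (0 : ℝ)) :=
    fun _ _ _ _ h ↦ neg_injective (exp_injective h)
  rw [← hImage, integral_image_eq_integral_abs_deriv_smul measurableSet_Ioi hDeriv hInj]
  simp_rw [abs_neg, abs_of_pos (exp_pos _)]

theorem integral_log_mul_log_one_sub_sq_mul_clog_log :
    ∫ x in (0:ℝ)..1,
        (Real.log x : ℂ) * (Real.log (1 - x ^ 2) : ℂ) *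
          Complex.log ((Real.log x : ℝ) : ℂ) / (x : ℂ) =
      (1 / 4) * (deriv riemannZeta 3 +
        riemannZeta 3 *
          (1 - (Real.eulerMascheroniConstant : ℂ) + (π : ℂ) * Complex.I -
            (Real.log 2 : ℂ))) := by
  have hIntegrand : ∀ t ∈ Ioi (0 : ℝ),
      exp (-t) • ((log (exp (-t)) : ℂ) * (log (1 - exp (-t) ^ 2) : ℂ) *
        Complex.log ((log (exp (-t)) : ℝ) : ℂ) / (exp (-t) : ℂ)) =
      ((-(t * log (1 - exp (-(2 * t)))) : ℝ) : ℂ) * (log t + π * Complex.I) := by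
    intro t ht
    have : (exp (-t) : ℂ) ≠ 0 := by exact_mod_cast (exp_pos _).ne'
    rw [log_exp, ← exp_nat_mul, Complex.ofReal_neg, Complex.log_neg_ofReal_of_pos ht,
      Complex.real_smul]
    push_cast
    field_simp
  rw [intervalIntegral.integral_of_le zero_le_one, integral_Ioc_eq_integral_Ioo,
    integral_Ioo_zero_one_eq_integral_Ioi_exp_neg_smul,
    setIntegral_congr_fun measurableSet_Ioi hIntegrand,
    integral_neg_mul_log_one_sub_exp_neg_mul_mul_log_add_pi_mul_I two_pos]
  push_cast
  ring
end
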